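/- arXiv:1606.02789 — 6 statements merged into one kernel-verified Lean document; each statement's English description precedes it below -/
import Mathlib

section
/- Let (M, {s_x}) be an s-set and let I = (i_1, …, i_l) ∈ ℤ^l. Define η_I(x, y, z) = w_I(s_x, s_y)(z), where w_I(X,Y) = X^{i_1} Y^{i_2} X^{i_3} ⋯ is the alternating word determined by I. Then η := η_I satisfies the distributivity identity η(x, y, η(u, v, w)) = η(η(x, y, u), η(x, y, v), η(x, y, w)) for all x, y, u, v, w ∈ M. -/
/-- Evaluation of the alternating word `w_I(X,Y) = X^{i₁} Y^{i₂} X^{i₃} ⋯`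
determined by `I = (i₁, …, i_l) ∈ ℤ^l`, on two bijections `a, b`. -/
def altWord {M : Type*} (a b : Equiv.Perm M) : List ℤ → Equiv.Perm M
  | [] => 1
  | i :: t => a ^ i * altWord b a t

/-- The subgroup of permutations that conjugate each `s y` correctly. -/
def ssetSubgroup {M : Type*} (s : M → Equiv.Perm M) : Subgroup (Equiv.Perm M) where
  carrier := {g | ∀ y, g * s y * g⁻¹ = s (g y)}
  one_mem' := by intro y; simp
  mul_mem' := by
    intro a b ha hb y
    have : a * b * s y * (a * b)⁻¹ = a * (b * s y * b⁻¹) * a⁻¹ := by group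
    rw [this, hb, ha]
    simp
  inv_mem' := by
    intro a ha y
    have h := ha (a⁻¹ y)
    have h2 : s (a (a⁻¹ y)) = s y := by simp
    rw [h2] at h
    rw [← h]; group

lemma sx_mem {M : Type*} (s : M → Equiv.Perm M)
    (hs : ∀ x y : M, ⇑(s x) ∘ ⇑(s y) = ⇑(s (s x y)) ∘ ⇑(s x)) (x : M) :
    s x ∈ ssetSubgroup s := by
  intro y
  have : s x * s y = s (s x y) * s x := by
    ext z; exact congrFun (hs x y) z
  rw [mul_inv_eq_iff_eq_mul]
  exact this

lemma conj_mem {M : Type*} (s : M → Equiv.Perm M) {g : Equiv.Perm M}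
    (hg : g ∈ ssetSubgroup s) (u v : M) (I : List ℤ) :
    altWord (s (g u)) (s (g v)) I = g * altWord (s u) (s v) I * g⁻¹ := by
  induction I generalizing u v with
  | nil => simp [altWord]
  | cons i t ih =>
    rw [altWord, altWord, ih v u, ← hg u, conj_zpow]
    group

lemma altWord_mem {M : Type*} (s : M → Equiv.Perm M)
    (hs : ∀ x y : M, ⇑(s x) ∘ ⇑(s y) = ⇑(s (s x y)) ∘ ⇑(s x))
    (x y : M) (I : List ℤ) :
    altWord (s x) (s y) I ∈ ssetSubgroup s := by
  induction I generalizing x y with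
  | nil => exact one_mem _
  | cons i t ih =>
    exact mul_mem (zpow_mem (sx_mem s hs x) i) (ih y x)

/-- For an s-set `(M, {s x})` and `I ∈ ℤ^l`, the ternary
operation `η_I (x, y, z) = w_I(s x, s y) z` satisfies the distributivity
identity `η (x, y, η (u, v, w)) = η (η(x,y,u), η(x,y,v), η(x,y,w))`. -/
theorem sset_eta_distributive (M : Type*) [Nonempty M] (s : M → Equiv.Perm M)
    (hs : ∀ x y : M, ⇑(s x) ∘ ⇑(s y) = ⇑(s (s x y)) ∘ ⇑(s x))
    (I : List ℤ) (η : M → M → M → M)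
    (hη : ∀ x y z : M, η x y z = altWord (s x) (s y) I z) :
    ∀ x y u v w : M,
      η x y (η u v w) = η (η x y u) (η x y v) (η x y w) := by
  intro x y u v w
  simp only [hη]
  rw [conj_mem s (altWord_mem s hs x y I)]
  simp [Equiv.Perm.mul_apply]
end

section
/- Let R be a ring with unit, M a left R-module, r ∈ R invertible, and I = (i_1, …, i_l) ∈ ℤ^l with l ≥ 2. Define s_x(y) = (1−r)x + ry, η_I(x,y,z) = w_I(s_x, s_y)(z) for the alternating word w_I, and d = i_1 + ⋯ + i_l. Then η_I(x, y, z) = (Φ_I(r) − r^d)x + (1 − Φ_I(r))y + r^d z for all x, y, z ∈ M, where Φ_I(X) = 1 + Σ_{j=1}^{l} (−1)^j X^{i_1+⋯+i_j} if l is even, and Φ_I(X) = 1 + Σ_{j=1}^{l−1} (−1)^j X^{i_1+⋯+i_j} if l is odd. -/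
/-- The Laurent polynomial value `Φ_I(r)`:
`Φ_I(r) = 1 + Σ_{j=1}^{m} (-1)^j r^{i₁+⋯+i_j}`, where `m = l` if `l` is even
and `m = l - 1` if `l` is odd. -/
def PhiI {R : Type*} [Ring R] (r : Rˣ) (I : List ℤ) : R :=
  1 + ∑ j ∈ Finset.range (if I.length % 2 = 0 then I.length else I.length - 1),
        (-1 : R) ^ (j + 1) * ((r ^ ((I.take (j + 1)).sum) : Rˣ) : R)

/-! Each `s x` is the homothety with centre `x` and ratio `r`, so `(s x) ^ n` is the homothety
with centre `x` and ratio `r ^ n`. Peeling two letters off the word at a time, the coefficients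
satisfy `Φ_{i :: j :: t}(r) = 1 - r ^ i + r ^ (i + j) Φ_t(r)`, which is also the recursion of the
closed form of `Φ`. -/

namespace Equiv.Perm

variable {R M : Type*} [Ring R] [AddCommGroup M] [Module R M]

def IsHomothety (σ : Equiv.Perm M) (c : M) (u : R) : Prop :=
  ∀ z, σ z = c + u • (z - c)

namespace IsHomothety

variable {σ τ : Equiv.Perm M} {c : M}

theorem one (c : M) : IsHomothety (1 : Equiv.Perm M) c (1 : R) := fun z => by simp

theorem mul {u v : R} (hσ : IsHomothety σ c u) (hτ : IsHomothety τ c v) :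
    IsHomothety (σ * τ) c (u * v) := fun z => by
  rw [mul_apply, hσ, hτ, add_sub_cancel_left, smul_smul]

theorem inv {u : Rˣ} (hσ : IsHomothety σ c (u : R)) : IsHomothety σ⁻¹ c ((u⁻¹ : Rˣ) : R) :=
  fun z => by
    rw [inv_def, symm_apply_eq, hσ, add_sub_cancel_left, smul_smul, Units.mul_inv, one_smul,
      add_sub_cancel]

theorem zpow {u : Rˣ} (hσ : IsHomothety σ c (u : R)) (n : ℤ) :
    IsHomothety (σ ^ n) c ((u ^ n : Rˣ) : R) := by
  induction n using Int.induction_on with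
  | zero => simpa using one c
  | succ n ih => simpa [zpow_add_one] using ih.mul hσ
  | pred n ih => simpa [zpow_sub_one] using ih.mul hσ.inv

end IsHomothety

end Equiv.Perm

section Phi

variable {R : Type*} [Ring R]

theorem PhiI_nil (r : Rˣ) : PhiI r ([] : List ℤ) = (1 : R) := by
  simp [PhiI]

theorem PhiI_singleton (r : Rˣ) (i : ℤ) : PhiI r [i] = (1 : R) := by
  simp [PhiI]

theorem PhiI_cons_cons (r : Rˣ) (i j : ℤ) (t : List ℤ) :
    PhiI r (i :: j :: t) = 1 - ((r ^ i : Rˣ) : R) + ((r ^ (i + j) : Rˣ) : R) * PhiI r t := by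
  have hlen : (if (i :: j :: t).length % 2 = 0 then (i :: j :: t).length
        else (i :: j :: t).length - 1)
      = (if t.length % 2 = 0 then t.length else t.length - 1) + 2 := by
    simp only [List.length_cons]; split_ifs <;> omega
  have hterm (k : ℕ) :
      (-1 : R) ^ (k + 1 + 1 + 1) * ((r ^ ((i :: j :: t).take (k + 1 + 1 + 1)).sum : Rˣ) : R)
        = ((r ^ (i + j) : Rˣ) : R) * ((-1) ^ (k + 1) * ((r ^ (t.take (k + 1)).sum : Rˣ) : R)) := by
    have hsign : Commute ((r ^ (i + j) : Rˣ) : R) ((-1) ^ (k + 1)) :=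
      (Commute.neg_one_right _).pow_right _
    rw [hsign.left_comm, ← Units.val_mul, ← zpow_add, pow_succ _ (k + 1 + 1), pow_succ _ (k + 1),
      mul_neg_one, mul_neg_one, neg_neg,
      List.take_succ_cons, List.take_succ_cons, List.sum_cons, List.sum_cons, add_assoc]
  rw [PhiI, PhiI, hlen, Finset.sum_range_succ', Finset.sum_range_succ', mul_add, mul_one,
    Finset.mul_sum]
  simp only [hterm]
  simp only [zero_add, Nat.reduceAdd, even_two, Even.neg_pow, one_pow, List.take_succ_cons,
    List.take_zero, List.sum_cons, List.sum_nil, add_zero, one_mul, pow_one, neg_mul]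
  abel

end Phi

theorem altWord_cons_cons {M : Type*} (a b : Equiv.Perm M) (i j : ℤ) (t : List ℤ) :
    altWord a b (i :: j :: t) = a ^ i * (b ^ j * altWord a b t) := rfl

section Word

variable {R M : Type*} [Ring R] [AddCommGroup M] [Module R M]

open Equiv.Perm

theorem altWord_apply_of_isHomothety {a b : Equiv.Perm M} {x y : M} {r : Rˣ}
    (ha : IsHomothety a x (r : R)) (hb : IsHomothety b y (r : R)) :
    ∀ (I : List ℤ) (z : M), altWord a b I z
      = (PhiI r I - ((r ^ I.sum : Rˣ) : R)) • x + (1 - PhiI r I) • y + ((r ^ I.sum : Rˣ) : R) • z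
  | [], z => by simp [altWord, PhiI_nil]
  | [i], z => by
    rw [altWord, altWord, mul_one, ha.zpow, PhiI_singleton, List.sum_singleton]
    match_scalars <;> noncomm_ring
  | i :: j :: t, z => by
    rw [altWord_cons_cons, mul_apply, mul_apply, ha.zpow, hb.zpow,
      altWord_apply_of_isHomothety ha hb t, PhiI_cons_cons, List.sum_cons, List.sum_cons,
      zpow_add, zpow_add, zpow_add, Units.val_mul, Units.val_mul, Units.val_mul]
    match_scalars <;> noncomm_ring

end Word

theorem affine_eta_formula_general (R : Type*) [Ring R]
    (M : Type*) [AddCommGroup M] [Module R M] (r : Rˣ)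
    (s : M → Equiv.Perm M)
    (hs : ∀ x y : M, s x y = (1 - (r : R)) • x + (r : R) • y)
    (I : List ℤ) :
    ∀ x y z : M,
      altWord (s x) (s y) I z
        = (PhiI r I - ((r ^ I.sum : Rˣ) : R)) • x
          + (1 - PhiI r I) • y + ((r ^ I.sum : Rˣ) : R) • z := by
  have hom (x : M) : Equiv.Perm.IsHomothety (s x) x (r : R) := fun z => by
    rw [hs]
    match_scalars <;> noncomm_ring
  exact fun x y => altWord_apply_of_isHomothety (hom x) (hom y) I

/-- For the affine s-set `s x y = (1 - r) • x + r • y` and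
`I ∈ ℤ^l` with `l ≥ 2`, setting `d = i₁ + ⋯ + i_l`,
`η_I(x, y, z) = (Φ_I(r) - r^d) • x + (1 - Φ_I(r)) • y + r^d • z`. -/
theorem affine_eta_formula (R : Type*) [Ring R]
    (M : Type*) [AddCommGroup M] [Module R M] (r : Rˣ)
    (s : M → Equiv.Perm M)
    (hs : ∀ x y : M, s x y = (1 - (r : R)) • x + (r : R) • y)
    (I : List ℤ) (hI : 2 ≤ I.length) :
    ∀ x y z : M,
      altWord (s x) (s y) I z
        = (PhiI r I - ((r ^ I.sum : Rˣ) : R)) • x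
          + (1 - PhiI r I) • y + ((r ^ I.sum : Rˣ) : R) • z :=
  affine_eta_formula_general R M r s hs I
end

section
/- Let (S, η) be a homogeneous pre-system satisfying η(x, y, z) = η(w, η(x, y, w), z) for all x, y, z, w ∈ S, and define μ(a, b, c) := η(b, a, c). Then μ(a, μ(a,b,c), μ(μ(a,b,c), c, d)) = μ(a, b, μ(b, c, d)) for all a, b, c, d ∈ S. -/
/-- If `(S, η)` is a homogeneous pre-system satisfying also
`η(x,y,z) = η(w, η(x,y,w), z)`, and `μ(a,b,c) := η(b,a,c)`, then
`μ(a, μ(a,b,c), μ(μ(a,b,c), c, d)) = μ(a, b, μ(b, c, d))`. -/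
theorem mu_identity_one (S : Type*) [Nonempty S] (η : S → S → S → S)
    (h1 : ∀ x y : S, η x y x = y)
    (h2 : ∀ x y u v w : S,
      η x y (η u v w) = η (η x y u) (η x y v) (η x y w))
    (h3 : ∀ x y z w : S, η x y z = η w (η x y w) z)
    (μ : S → S → S → S) (hμ : ∀ a b c : S, μ a b c = η b a c) :
    ∀ a b c d : S,
      μ a (μ a b c) (μ (μ a b c) c d) = μ a b (μ b c d) := by
  intro a b c d
  simp only [hμ]
  calc η (η b a c) a (η c (η b a c) d)
      = η (η b a c) (η b a b) (η b a d) := by rw [← h3 b a d c, h1 b a]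
    _ = η b a (η c b d) := (h2 b a c b d).symm
end

section
/- Let (S, η) be a homogeneous pre-system satisfying η(x, y, z) = η(w, η(x, y, w), z) for all x, y, z, w ∈ S, and define μ(a, b, c) := η(b, a, c). Then μ(μ(a,b,c), c, d) = μ(μ(a, b, μ(b,c,d)), μ(b,c,d), d) for all a, b, c, d ∈ S. -/
/-- If `(S, η)` is a homogeneous pre-system satisfying also
`η(x,y,z) = η(w, η(x,y,w), z)`, and `μ(a,b,c) := η(b,a,c)`, then
`μ(μ(a,b,c), c, d) = μ(μ(a, b, μ(b,c,d)), μ(b,c,d), d)`. -/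
theorem mu_identity_two (S : Type*) [Nonempty S] (η : S → S → S → S)
    (h1 : ∀ x y : S, η x y x = y)
    (h2 : ∀ x y u v w : S,
      η x y (η u v w) = η (η x y u) (η x y v) (η x y w))
    (h3 : ∀ x y z w : S, η x y z = η w (η x y w) z)
    (μ : S → S → S → S) (hμ : ∀ a b c : S, μ a b c = η b a c) :
    ∀ a b c d : S,
      μ (μ a b c) c d = μ (μ a b (μ b c d)) (μ b c d) d := by
  intro a b c d
  simp only [hμ]
  rw [← h3 b a d c, ← h3 b a d (η c b d)]
end

section
/- Let r ∈ ℂ be a primitive 6th root of unity. Then 1 − r + r^2 = 0, and for any ℂ-vector space V, the ternary operation η(x, y, z) = −r^2 x + y + r^2 z makes (V, η) a homogeneous pre-system satisfying η(x,y,z) = η(w, η(x,y,w), z). -/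
/-- For a primitive 6th root of unity `r ∈ ℂ`, `1 - r + r² = 0`,
and for any `ℂ`-vector space `V`, `η(x,y,z) = -r² • x + y + r² • z` makes
`(V, η)` a homogeneous pre-system satisfying `η(x,y,z) = η(w, η(x,y,w), z)`. -/
theorem primitive_sixth_root_hps (r : ℂ) (hr : IsPrimitiveRoot r 6) :
    (1 - r + r ^ 2 = 0) ∧
    ∀ (V : Type*) [AddCommGroup V] [Module ℂ V]
      (η : V → V → V → V),
      (∀ x y z : V, η x y z = -((r ^ 2) • x) + y + (r ^ 2) • z) →
      (∀ x y : V, η x y x = y) ∧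
      (∀ x y u v w : V,
        η x y (η u v w) = η (η x y u) (η x y v) (η x y w)) ∧
      (∀ x y z w : V, η x y z = η w (η x y w) z) := by
  constructor
  · have h6 : r ^ 6 = 1 := hr.pow_eq_one
    have h2 : r ^ 2 ≠ 1 := hr.pow_ne_one_of_pos_of_lt (by norm_num) (by norm_num)
    have h3 : r ^ 3 ≠ 1 := hr.pow_ne_one_of_pos_of_lt (by norm_num) (by norm_num)
    have hsq : r ^ 3 * r ^ 3 = 1 := by rw [← pow_add]; simpa using h6
    have h3' : r ^ 3 = -1 := (mul_self_eq_one_iff.mp hsq).resolve_left h3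
    have hne : r + 1 ≠ 0 := by
      intro h
      have hr1 : r = -1 := by linear_combination h
      exact h2 (by rw [hr1]; ring)
    have key : (r + 1) * (1 - r + r ^ 2) = 0 := by linear_combination h3'
    exact (mul_eq_zero.mp key).resolve_left hne
  · intro V _ _ η hη
    refine ⟨?_, ?_, ?_⟩ <;> intros <;> simp only [hη] <;> module
end

section
/- Let (S, η) be a homogeneous pre-system satisfying η(x,y,z) = η(w, η(x,y,w), z) for all x,y,z,w ∈ S, let Q be a quasigroup with a bijection π : Q → S, define μ(a,b,c) = η(b,a,c), h(λ, v, u) = π^{-1}(μ(π(λ), π(λv), π((λv)u))), and σ(λ)(u, v) = (h(λ,v,u) \ ((λv)u), λ \ h(λ,v,u)) for λ, u, v ∈ Q. Then σ satisfies the dynamical Yang–Baxter equation σ₁₂(λ X⁽³⁾) σ₂₃(λ) σ₁₂(λ X⁽³⁾) = σ₂₃(λ) σ₁₂(λ X⁽³⁾) σ₂₃(λ) for all λ ∈ Q. -/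
section
variable {H X : Type*}

/-- `σ₁₂(λ X⁽³⁾)(x,y,z) = (σ(λz)(x,y), z)`. -/
def sigma12sh (act : H → X → H) (σ : H → X × X → X × X) (lam : H) :
    X × X × X → X × X × X :=
  fun p => ((σ (act lam p.2.2) (p.1, p.2.1)).1, (σ (act lam p.2.2) (p.1, p.2.1)).2, p.2.2)

/-- `σ₂₃(λ)(x,y,z) = (x, σ(λ)(y,z))`. -/
def sigma23 (σ : H → X × X → X × X) (lam : H) : X × X × X → X × X × X :=
  fun p => (p.1, σ lam (p.2.1, p.2.2))

end

/-- Let `(S, η)` be a homogeneous pre-system satisfying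
`η(x,y,z) = η(w, η(x,y,w), z)`, `Q` a quasigroup with bijection `π : Q ≃ S`,
`μ(a,b,c) = η(b,a,c)`, `h(λ,v,u) = π⁻¹(μ(π λ, π(λv), π((λv)u)))`, and
`σ(λ)(u,v) = (h(λ,v,u) \ ((λv)u), λ \ h(λ,v,u))`. Then `σ` satisfies the
braid-type dynamical Yang–Baxter equation. -/
theorem sset_dybm (S : Type*) [Nonempty S] (η : S → S → S → S)
    (hη1 : ∀ x y : S, η x y x = y)
    (hη2 : ∀ x y u v w : S,
      η x y (η u v w) = η (η x y u) (η x y v) (η x y w))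
    (hη3 : ∀ x y z w : S, η x y z = η w (η x y w) z)
    (Q : Type*) [Nonempty Q] (op : Q → Q → Q)
    (hleft : ∀ u : Q, Function.Bijective (fun v => op u v))
    (hright : ∀ v : Q, Function.Bijective (fun u => op u v))
    (lb : Q → Q → Q) (hlb : ∀ u w : Q, op u (lb u w) = w)
    (π : Q ≃ S)
    (σ : Q → Q × Q → Q × Q)
    (hσ : ∀ lam u v : Q,
      σ lam (u, v) =
        (lb (π.symm (η (π (op lam v)) (π lam) (π (op (op lam v) u))))
            (op (op lam v) u),
         lb lam (π.symm (η (π (op lam v)) (π lam) (π (op (op lam v) u)))))) :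
    ∀ lam : Q,
      sigma12sh op σ lam ∘ sigma23 σ lam ∘ sigma12sh op σ lam
        = sigma23 σ lam ∘ sigma12sh op σ lam ∘ sigma23 σ lam := by

  have hlb' : ∀ u v : Q, lb u (op u v) = v := by
    intro u v
    exact (hleft u).1 (by simpa using hlb u (op u v))
  intro lam
  funext p
  obtain ⟨x, y, z⟩ := p
  simp only [Function.comp, sigma12sh, sigma23, hσ, hlb, hlb',
    Equiv.apply_symm_apply]
  set a := π lam with ha
  set pp := π (op lam z) with hp
  set m := π (op (op lam z) y) with hm
  set W := op (op (op lam z) y) x with hW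
  have e1 : η (η m pp (π W)) (η pp a (η m pp (π W))) (π W) = η pp a (π W) :=
    (hη3 pp a (π W) (η m pp (π W))).symm
  have e2 : η m (η pp a m) (π W) = η pp a (π W) :=
    (hη3 pp a (π W) m).symm
  have e3 : η pp a (η m pp (π W)) = η (η pp a m) a (η m (η pp a m) (π W)) := by
    rw [hη2 pp a m pp (π W), hη1 pp a, e2]
  rw [e1, e3, e2]
end
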